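/- arXiv:math/0207188 — 2 statements merged into one kernel-verified Lean document; each statement's English description precedes it below -/
import Mathlib

section
/- Let (H,f) be a symmetric bilinear lattice. The radical of the pairing L_f on G_f = H^♯/H, i.e. {[x] ∈ G_f : L_f([x],[y]) = 0 for all [y] ∈ G_f}, is isomorphic to (Ker f̂) ⊗ ℚ/ℤ, where f̂ : H → Hom(H,ℤ) is the adjoint of f. -/
/-! Write `K = ker f`. Since `ℚ` is flat, `K ⊗ ℚ` embeds in `ℚ ⊗ H`, as a space killed by `f_ℚ`
and therefore contained in the radical. Conversely, let `x` lie in the radical. Each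
`φ : H ⧸ K → ℤ`, extended to `ℚ ⊗ H`, vanishes on `ker f_ℚ`. Because `f_ℚ` is symmetric, its image
is the annihilator of its kernel, so this extension is `f_ℚ(y, -)` for some `y`. That `y` lies in
`H^♯`, so `φ(x) = f_ℚ(x, y) ∈ ℤ`. As `H ⧸ K` is free, the image of `x` in `ℚ ⊗ (H ⧸ K)` is
therefore integral, and `x ∈ (K ⊗ ℚ) + H`. Hence the radical modulo `H` is
`(K ⊗ ℚ) ⧸ (K ⊗ ℤ)`, which is `K ⊗ ℚ/ℤ` by right exactness of `⊗`. -/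

open scoped TensorProduct

noncomputable section

/-- ℚ/ℤ -/
abbrev QZ : Type := AddCircle (1 : ℚ)

section Lattice

variable {H : Type} [AddCommGroup H]

/-- canonical map H → ℚ ⊗ H -/
def iotaQ (H : Type) [AddCommGroup H] : H →ₗ[ℤ] ℚ ⊗[ℤ] H :=
  TensorProduct.mk ℤ ℚ H 1

/-- the ℚ-bilinear extension of f to ℚ ⊗ H -/
def fQ (f : H →ₗ[ℤ] H →ₗ[ℤ] ℤ) : (ℚ ⊗[ℤ] H) →ₗ[ℚ] (ℚ ⊗[ℤ] H) →ₗ[ℚ] ℚ :=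
  LinearMap.BilinForm.baseChange ℚ f

/-- the ℚ-linear extension of a linear form c : H → ℤ to ℚ ⊗ H -/
def cQ (c : H →ₗ[ℤ] ℤ) : (ℚ ⊗[ℤ] H) →ₗ[ℚ] ℚ :=
  LinearMap.liftBaseChange ℚ ((Int.castAddHom ℚ).toIntLinearMap ∘ₗ c)

/-- the dual lattice H^♯ = {x ∈ ℚ⊗H : f_ℚ(x, H) ⊆ ℤ} -/
def dualLattice (f : H →ₗ[ℤ] H →ₗ[ℤ] ℤ) : AddSubgroup (ℚ ⊗[ℤ] H) where
  carrier := {x | ∀ h : H, ∃ n : ℤ, fQ f x (iotaQ H h) = (n : ℚ)}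
  zero_mem' := fun h => ⟨0, by simp⟩
  add_mem' := by
    rintro x y hx hy h
    obtain ⟨n, hn⟩ := hx h
    obtain ⟨m, hm⟩ := hy h
    exact ⟨n + m, by push_cast [map_add, LinearMap.add_apply, hn, hm]; ring⟩
  neg_mem' := by
    rintro x hx h
    obtain ⟨n, hn⟩ := hx h
    exact ⟨-n, by push_cast [map_neg, LinearMap.neg_apply, hn]; ring⟩

/-- the image of H, as a subgroup of the dual lattice -/
def latInDual (f : H →ₗ[ℤ] H →ₗ[ℤ] ℤ) : AddSubgroup (dualLattice f) :=
  ((iotaQ H).toAddMonoidHom.range).addSubgroupOf (dualLattice f)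

/-- the discriminant group G_f = H^♯/H -/
def Gf (f : H →ₗ[ℤ] H →ₗ[ℤ] ℤ) : Type :=
  dualLattice f ⧸ latInDual f

instance (f : H →ₗ[ℤ] H →ₗ[ℤ] ℤ) : AddCommGroup (Gf f) :=
  QuotientAddGroup.Quotient.addCommGroup _

/-- the discriminant quadratic function, on representatives:
φ_{f,c}(x) = (1/2)(f_ℚ(x,x) − c_ℚ(x)) mod 1 -/
def phiRep (f : H →ₗ[ℤ] H →ₗ[ℤ] ℤ) (c : H →ₗ[ℤ] ℤ) (x : dualLattice f) : QZ :=
  ((((1 : ℚ)/2) * (fQ f x x - cQ c x) : ℚ) : QZ)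

/-- the (preimage in H^♯ of the) radical of L_f -/
def radSub (f : H →ₗ[ℤ] H →ₗ[ℤ] ℤ) : AddSubgroup (dualLattice f) where
  carrier := {x | ∀ y : dualLattice f, ∃ n : ℤ, fQ f x y = (n : ℚ)}
  zero_mem' := fun y => ⟨0, by simp⟩
  add_mem' := by
    rintro x x' hx hx' y
    obtain ⟨n, hn⟩ := hx y
    obtain ⟨m, hm⟩ := hx' y
    exact ⟨n + m, by push_cast [AddSubgroup.coe_add, map_add, LinearMap.add_apply, hn, hm]; ring⟩
  neg_mem' := by
    rintro x hx y
    obtain ⟨n, hn⟩ := hx y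
    exact ⟨-n, by push_cast [AddSubgroup.coe_neg, map_neg, LinearMap.neg_apply, hn]; ring⟩

end Lattice

open TensorProduct LinearMap

section Rationalization

variable {M : Type} [AddCommGroup M]

lemma iotaQ_apply (m : M) : iotaQ M m = (1 : ℚ) ⊗ₜ[ℤ] m := rfl

instance iotaQ_isLocalizedModule : IsLocalizedModule (nonZeroDivisors ℤ) (iotaQ M) :=
  (isLocalizedModule_iff_isBaseChange (nonZeroDivisors ℤ) ℚ _).mpr
    (TensorProduct.isBaseChange ℤ M ℚ)

lemma exists_zsmul_eq_iotaQ (u : ℚ ⊗[ℤ] M) : ∃ d : ℤ, d ≠ 0 ∧ ∃ m : M, d • u = iotaQ M m := by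
  obtain ⟨⟨m, d⟩, h⟩ := IsLocalizedModule.surj (nonZeroDivisors ℤ) (iotaQ M) u
  exact ⟨d, nonZeroDivisors.coe_ne_zero d, m, h⟩

lemma cQ_tmul (c : M →ₗ[ℤ] ℤ) (q : ℚ) (m : M) : cQ c (q ⊗ₜ[ℤ] m) = q * c m := by
  simp [cQ, smul_eq_mul]

lemma cQ_lTensor {N : Type} [AddCommGroup N] (g : M →ₗ[ℤ] N) (φ : N →ₗ[ℤ] ℤ) (x : ℚ ⊗[ℤ] M) :
    cQ φ (lTensor ℚ g x) = cQ (φ ∘ₗ g) x := by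
  induction x using TensorProduct.induction_on with
  | zero => simp
  | tmul q m => simp [cQ_tmul]
  | add a b ha hb => simp only [map_add, ha, hb]

lemma exists_iotaQ_eq_of_cQ_integral [Module.Free ℤ M] [Module.Finite ℤ M] (z : ℚ ⊗[ℤ] M)
    (hz : ∀ φ : M →ₗ[ℤ] ℤ, ∃ n : ℤ, cQ φ z = n) : ∃ m : M, iotaQ M m = z := by
  let b := Module.Free.chooseBasis ℤ M
  let bQ := Algebra.TensorProduct.basis ℚ b
  have hcoord (i) : cQ (b.coord i) = bQ.coord i := bQ.ext fun j => by
    simp [bQ, cQ_tmul, Finsupp.single_apply]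
  choose n hn using fun i => hz (b.coord i)
  refine ⟨∑ i, n i • b i, ?_⟩
  conv_rhs => rw [← bQ.sum_repr z]
  simp only [map_sum, map_zsmul, iotaQ_apply]
  refine Finset.sum_congr rfl fun i _ => ?_
  rw [← Module.Basis.coord_apply, ← hcoord, hn, Int.cast_smul_eq_zsmul,
    Algebra.TensorProduct.basis_apply]

end Rationalization

theorem LinearMap.IsSymm.range_eq_dualAnnihilator_ker {K V : Type*} [Field K] [AddCommGroup V]
    [Module K V] [FiniteDimensional K V] {B : LinearMap.BilinForm K V} (hB : LinearMap.IsSymm B) :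
    range B = (ker B).dualAnnihilator := by
  have hB' : B = B.dualMap ∘ₗ (Module.evalEquiv K V).toLinearMap := by
    ext x y; exact hB.eq x y
  rw [← range_dualMap_eq_dualAnnihilator_ker,
    ← range_comp_of_range_eq_top B.dualMap (LinearEquiv.range (Module.evalEquiv K V)), ← hB']

lemma exact_algebraMap_addCircle :
    Function.Exact (Algebra.linearMap ℤ ℚ)
      (QuotientAddGroup.mk' (AddSubgroup.zmultiples (1 : ℚ))).toIntLinearMap := fun q => by
  simp [AddSubgroup.mem_zmultiples_iff]

section Radical

variable {H : Type} [AddCommGroup H] (f : H →ₗ[ℤ] H →ₗ[ℤ] ℤ)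

lemma fQ_tmul (q r : ℚ) (a b : H) : fQ f (q ⊗ₜ[ℤ] a) (r ⊗ₜ[ℤ] b) = q * r * f a b := by
  simp [fQ, zsmul_eq_mul, mul_comm]

lemma fQ_iotaQ (a b : H) : fQ f (iotaQ H a) (iotaQ H b) = f a b := by
  simp [iotaQ_apply, fQ_tmul]

lemma fQ_isSymm (hf : ∀ x y, f x y = f y x) : (fQ f).IsSymm :=
  LinearMap.BilinForm.IsSymm.baseChange ℚ ⟨fun a b => by simp [hf a b]⟩

lemma mem_ker_of_fQ_iotaQ_eq_zero {h : H} (hh : fQ f (iotaQ H h) = 0) : h ∈ ker f := by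
  ext h'
  simpa [fQ_iotaQ] using LinearMap.congr_fun hh (iotaQ H h')

lemma lTensor_mkQ_eq_zero_of_fQ_eq_zero {v : ℚ ⊗[ℤ] H} (hv : fQ f v = 0) :
    lTensor ℚ (ker f).mkQ v = 0 := by
  obtain ⟨d, hd, h, hdv⟩ := exists_zsmul_eq_iotaQ v
  have hh : h ∈ ker f := mem_ker_of_fQ_iotaQ_eq_zero f (by rw [← hdv, map_zsmul, hv, smul_zero])
  have : d • lTensor ℚ (ker f).mkQ v = 0 := by
    rw [← map_zsmul, hdv, iotaQ_apply, lTensor_tmul, Submodule.mkQ_apply,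
      (Submodule.Quotient.mk_eq_zero _).mpr hh, tmul_zero]
  rw [← Int.cast_smul_eq_zsmul ℚ] at this
  exact (smul_eq_zero.mp this).resolve_left (by exact_mod_cast hd)

lemma exists_fQ_eq [Module.Finite ℤ H] (hf : ∀ x y, f x y = f y x)
    (ψ : Module.Dual ℚ (ℚ ⊗[ℤ] H)) (hψ : ker (fQ f) ≤ ker ψ) : ∃ y, fQ f y = ψ := by
  rw [← mem_range, (fQ_isSymm f hf).range_eq_dualAnnihilator_ker, Submodule.mem_dualAnnihilator]
  exact fun v hv => hψ hv

-- `H ⧸ ker f` embeds in `H →ₗ[ℤ] ℤ`, so it is free once `H` is finitely generated.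
instance : Module.IsTorsionFree ℤ (H ⧸ ker f) :=
  Function.Injective.moduleIsTorsionFree _
    (ker_eq_bot.mp (Submodule.ker_liftQ_eq_bot _ f le_rfl le_rfl)) (fun _ _ => map_zsmul _ _ _)

lemma exists_iotaQ_eq_lTensor_mkQ [Module.Finite ℤ H] (hf : ∀ x y, f x y = f y x)
    {x : ℚ ⊗[ℤ] H} (hx : ∀ y : dualLattice f, ∃ n : ℤ, fQ f x y = n) :
    ∃ w, iotaQ (H ⧸ ker f) w = lTensor ℚ (ker f).mkQ x := by
  refine exists_iotaQ_eq_of_cQ_integral (lTensor ℚ (ker f).mkQ x) fun φ => ?_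
  obtain ⟨y, hy⟩ := exists_fQ_eq f hf (cQ (φ ∘ₗ (ker f).mkQ)) fun v hv => by
    rw [mem_ker, ← cQ_lTensor, lTensor_mkQ_eq_zero_of_fQ_eq_zero f hv, map_zero]
  have hy_dual : y ∈ dualLattice f := fun h =>
    ⟨φ ((ker f).mkQ h), by simp [hy, iotaQ_apply, cQ_tmul]⟩
  obtain ⟨n, hn⟩ := hx ⟨y, hy_dual⟩
  exact ⟨n, by rw [cQ_lTensor, ← hy, ← hn]; exact (fQ_isSymm f hf).eq y x⟩

def kerTensorIncl : ker f ⊗[ℤ] ℚ →ₗ[ℤ] ℚ ⊗[ℤ] H :=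
  lTensor ℚ (ker f).subtype ∘ₗ (TensorProduct.comm ℤ (ker f) ℚ).toLinearMap

lemma kerTensorIncl_tmul (k : ker f) (q : ℚ) : kerTensorIncl f (k ⊗ₜ q) = q ⊗ₜ[ℤ] (k : H) := rfl

lemma kerTensorIncl_injective : Function.Injective (kerTensorIncl f) :=
  (Module.Flat.lTensor_preserves_injective_linearMap _ (ker f).injective_subtype).comp
    (TensorProduct.comm ℤ (ker f) ℚ).injective

lemma fQ_kerTensorIncl (z : ker f ⊗[ℤ] ℚ) : fQ f (kerTensorIncl f z) = 0 := by
  induction z using TensorProduct.induction_on with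
  | zero => simp
  | tmul k q =>
    ext v
    simp [kerTensorIncl_tmul, fQ_tmul, LinearMap.mem_ker.mp k.2]
  | add a b ha hb => simp only [map_add, ha, hb, add_zero]

lemma kerTensorIncl_lTensor_algebraMap (w : ker f ⊗[ℤ] ℤ) :
    kerTensorIncl f (lTensor _ (Algebra.linearMap ℤ ℚ) w) =
      iotaQ H (TensorProduct.rid ℤ (ker f) w) := by
  induction w using TensorProduct.induction_on with
  | zero => simp
  | tmul k n => simp [kerTensorIncl_tmul, iotaQ_apply, TensorProduct.smul_tmul']
  | add a b ha hb => simp only [map_add, ha, hb, Submodule.coe_add]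

lemma exists_eq_kerTensorIncl_add_iotaQ [Module.Finite ℤ H] (hf : ∀ x y, f x y = f y x)
    {x : ℚ ⊗[ℤ] H} (hx : ∀ y : dualLattice f, ∃ n : ℤ, fQ f x y = n) :
    ∃ z h, x = kerTensorIncl f z + iotaQ H h := by
  obtain ⟨w, hw⟩ := exists_iotaQ_eq_lTensor_mkQ f hf hx
  obtain ⟨h, rfl⟩ := (ker f).mkQ_surjective w
  have hexact := lTensor_exact ℚ (exact_subtype_mkQ (ker f)) (ker f).mkQ_surjective
  obtain ⟨v, hv⟩ := (hexact (x - iotaQ H h)).mp (by rw [map_sub, ← hw]; exact sub_self _)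
  obtain ⟨z, rfl⟩ := (TensorProduct.comm ℤ (ker f) ℚ).surjective v
  exact ⟨z, h, sub_eq_iff_eq_add.mp hv.symm⟩

lemma kerTensorIncl_mem_range_iotaQ_iff (z : ker f ⊗[ℤ] ℚ) :
    kerTensorIncl f z ∈ range (iotaQ H) ↔ z ∈ range (lTensor _ (Algebra.linearMap ℤ ℚ)) := by
  constructor
  · rintro ⟨h, hh⟩
    have hk : h ∈ ker f := mem_ker_of_fQ_iotaQ_eq_zero f (by rw [hh, fQ_kerTensorIncl])
    refine ⟨(⟨h, hk⟩ : ker f) ⊗ₜ 1, kerTensorIncl_injective f ?_⟩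
    rw [kerTensorIncl_lTensor_algebraMap, TensorProduct.rid_tmul, one_smul, hh]
  · rintro ⟨w, rfl⟩
    exact ⟨_, (kerTensorIncl_lTensor_algebraMap f w).symm⟩

def kerTensorToRad : ker f ⊗[ℤ] ℚ →+ radSub f where
  toFun z := ⟨⟨kerTensorIncl f z, fun _ => ⟨0, by simp [fQ_kerTensorIncl]⟩⟩,
    fun _ => ⟨0, by simp [fQ_kerTensorIncl]⟩⟩
  map_zero' := by ext; exact map_zero _
  map_add' a b := by ext; exact map_add _ a b

def radQuotMap : ker f ⊗[ℤ] ℚ →ₗ[ℤ] radSub f ⧸ (latInDual f).addSubgroupOf (radSub f) :=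
  ((QuotientAddGroup.mk' _).comp (kerTensorToRad f)).toIntLinearMap

lemma exact_lTensor_algebraMap_radQuotMap :
    Function.Exact (lTensor (ker f) (Algebra.linearMap ℤ ℚ)) (radQuotMap f) := fun z =>
  (QuotientAddGroup.eq_zero_iff _).trans (kerTensorIncl_mem_range_iotaQ_iff f z)

lemma radQuotMap_surjective [Module.Finite ℤ H] (hf : ∀ x y, f x y = f y x) :
    Function.Surjective (radQuotMap f) := by
  rintro ⟨x⟩
  obtain ⟨z, h, hx⟩ := exists_eq_kerTensorIncl_add_iotaQ f hf x.2
  refine ⟨z, QuotientAddGroup.eq.mpr ⟨h, ?_⟩⟩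
  show _ = -kerTensorIncl f z + x
  rw [hx, neg_add_cancel_left]
  rfl

end Radical

theorem stmt13_general {H : Type} [AddCommGroup H] [Module.Finite ℤ H]
    (f : H →ₗ[ℤ] H →ₗ[ℤ] ℤ) (hf : ∀ x y, f x y = f y x) :
    Nonempty ((radSub f ⧸ (latInDual f).addSubgroupOf (radSub f)) ≃+
      ((LinearMap.ker f) ⊗[ℤ] QZ)) :=
  ⟨(((exact_lTensor_algebraMap_radQuotMap f).linearEquivOfSurjective
      (radQuotMap_surjective f hf)).symm ≪≫ₗ
    (lTensor_exact (ker f) exact_algebraMap_addCircle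
      (QuotientAddGroup.mk'_surjective _)).linearEquivOfSurjective
      (lTensor_surjective _ (QuotientAddGroup.mk'_surjective _))).toAddEquiv⟩

theorem stmt13 {H : Type} [AddCommGroup H] [Module.Free ℤ H] [Module.Finite ℤ H]
    (f : H →ₗ[ℤ] H →ₗ[ℤ] ℤ) (hf : ∀ x y, f x y = f y x) :
    Nonempty ((radSub f ⧸ (latInDual f).addSubgroupOf (radSub f)) ≃+
      ((LinearMap.ker f) ⊗[ℤ] QZ)) :=
  stmt13_general f hf
end
end

section
/- Let (H,f) be a symmetric bilinear lattice with characteristic form c and let φ_{f,c} be the discriminant quadratic function on G_f = H^♯/H. For every element of the radical of L_f of the form induced by y ⊗ r with y ∈ Ker f̂ and r ∈ ℚ, one has φ_{f,c}([y ⊗ r]) = −(1/2)·r·c(y) mod 1; in particular φ_{f,c} restricted to the radical is a group homomorphism. -/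
/-! For y ∈ Ker f̂ the form f_ℚ vanishes on y ⊗ r in its first argument, so on such elements
φ_{f,c} reduces to −½·c_ℚ mod 1, which is additive. -/

open scoped TensorProduct

noncomputable section

section Radical

variable {H : Type} [AddCommGroup H]

lemma iotaQ_apply_s19 (y : H) : iotaQ H y = (1 : ℚ) ⊗ₜ y := rfl

lemma fQ_smul_iotaQ_of_mem_ker {f : H →ₗ[ℤ] H →ₗ[ℤ] ℤ} {y : H} (hy : y ∈ LinearMap.ker f)
    (r : ℚ) : fQ f (r • iotaQ H y) = 0 := by
  ext z
  simp [fQ, iotaQ_apply_s19, LinearMap.mem_ker.mp hy]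

lemma cQ_smul_iotaQ (c : H →ₗ[ℤ] ℤ) (r : ℚ) (y : H) :
    cQ c (r • iotaQ H y) = r * (c y : ℚ) := by
  simp [cQ, iotaQ_apply_s19]

variable {f : H →ₗ[ℤ] H →ₗ[ℤ] ℤ} (c : H →ₗ[ℤ] ℤ)

lemma phiRep_of_fQ_eq_zero {x : dualLattice f} (hx : fQ f x = 0) :
    phiRep f c x = ((-(1/2 * cQ c x) : ℚ) : QZ) := by
  rw [phiRep, hx, LinearMap.zero_apply]
  congr 1
  ring

lemma phiRep_add_of_fQ_eq_zero {x x' : dualLattice f} (hx : fQ f x = 0) (hx' : fQ f x' = 0) :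
    phiRep f c (x + x') = phiRep f c x + phiRep f c x' := by
  have hxx' : fQ f ↑(x + x') = 0 := by rw [AddSubgroup.coe_add, map_add, hx, hx', add_zero]
  rw [phiRep_of_fQ_eq_zero c hx, phiRep_of_fQ_eq_zero c hx', phiRep_of_fQ_eq_zero c hxx',
    ← AddCircle.coe_add, AddSubgroup.coe_add, map_add]
  congr 1
  ring

end Radical

theorem stmt19_general {H : Type} [AddCommGroup H]
    (f : H →ₗ[ℤ] H →ₗ[ℤ] ℤ)
    (c : H →ₗ[ℤ] ℤ) :
    (∀ (x : dualLattice f) (y : H) (r : ℚ), y ∈ LinearMap.ker f →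
      (x : ℚ ⊗[ℤ] H) = r • iotaQ H y →
      phiRep f c x = ((-(1/2 * r * (c y : ℚ)) : ℚ) : QZ)) ∧
    (∀ (x x' : dualLattice f) (y y' : H) (r r' : ℚ),
      y ∈ LinearMap.ker f → y' ∈ LinearMap.ker f →
      (x : ℚ ⊗[ℤ] H) = r • iotaQ H y → (x' : ℚ ⊗[ℤ] H) = r' • iotaQ H y' →
      phiRep f c (x + x') = phiRep f c x + phiRep f c x') := by
  constructor
  · intro x y r hy hx
    have hfx : fQ f x = 0 := hx ▸ fQ_smul_iotaQ_of_mem_ker hy r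
    rw [phiRep_of_fQ_eq_zero c hfx, hx, cQ_smul_iotaQ, mul_assoc]
  · intro x x' y y' r r' hy hy' hx hx'
    exact phiRep_add_of_fQ_eq_zero c (hx ▸ fQ_smul_iotaQ_of_mem_ker hy r)
      (hx' ▸ fQ_smul_iotaQ_of_mem_ker hy' r')

theorem stmt19 {H : Type} [AddCommGroup H] [Module.Free ℤ H] [Module.Finite ℤ H]
    (f : H →ₗ[ℤ] H →ₗ[ℤ] ℤ) (hf : ∀ x y, f x y = f y x)
    (c : H →ₗ[ℤ] ℤ) (hc : ∀ h : H, (2 : ℤ) ∣ f h h - c h) :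
    (∀ (x : dualLattice f) (y : H) (r : ℚ), y ∈ LinearMap.ker f →
      (x : ℚ ⊗[ℤ] H) = r • iotaQ H y →
      phiRep f c x = ((-(1/2 * r * (c y : ℚ)) : ℚ) : QZ)) ∧
    (∀ (x x' : dualLattice f) (y y' : H) (r r' : ℚ),
      y ∈ LinearMap.ker f → y' ∈ LinearMap.ker f →
      (x : ℚ ⊗[ℤ] H) = r • iotaQ H y → (x' : ℚ ⊗[ℤ] H) = r' • iotaQ H y' →
      phiRep f c (x + x') = phiRep f c x + phiRep f c x') :=
  stmt19_general f c
end
end
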